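/- Let P, Q, R ⊆ ℝ³ be finite and let ◁₁, ◁₂ be generalized dominance relations. If P and R are x-separated, y-separated, and z-separated, then the number of distinct sets in the family {N²[r] : r ∈ R} is at most (|P| + 1)⁶. -/
import Mathlib


/-- The three possible coordinate relations: `<`, `>`, or the always-true relation. -/
inductive CoordRel
  | lt
  | gt
  | top

/-- Interpretation of a coordinate relation on real numbers. -/
def CoordRel.holds : CoordRel → ℝ → ℝ → Prop
  | .lt, a, b => a < b
  | .gt, a, b => b < a
  | .top, _, _ => True

/-- A generalized dominance relation on `ℝ³`: `p ◁ q` iff in each of the three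
coordinates a fixed relation (`<`, `>`, or always-true) holds. -/
def IsGenDom (rel : (Fin 3 → ℝ) → (Fin 3 → ℝ) → Prop) : Prop :=
  ∃ R : Fin 3 → CoordRel, ∀ p q, rel p q ↔ ∀ i, (R i).holds (p i) (q i)

/-- `A` and `B` are separated in coordinate `i`: some threshold `μ` has all of `A`
strictly below and all of `B` strictly above in coordinate `i`, or vice versa. -/
def SepAt (i : Fin 3) (A B : Set (Fin 3 → ℝ)) : Prop :=
  ∃ μ : ℝ, ((∀ a ∈ A, a i < μ) ∧ ∀ b ∈ B, μ < b i) ∨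
    ((∀ b ∈ B, b i < μ) ∧ ∀ a ∈ A, μ < a i)

/-- `N²[r] = {p ∈ P : ∃ q ∈ Q, p ◁₁ q and q ◁₂ r}`. -/
def N2 (P Q : Set (Fin 3 → ℝ)) (d₁ d₂ : (Fin 3 → ℝ) → (Fin 3 → ℝ) → Prop)
    (r : Fin 3 → ℝ) : Set (Fin 3 → ℝ) :=
  {p ∈ P | ∃ q ∈ Q, d₁ p q ∧ d₂ q r}

/-- auxiliary: four possible relations -/
inductive Rel4
  | lt
  | gt
  | top
  | bot

def Rel4.holds : Rel4 → ℝ → ℝ → Prop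
  | .lt, a, b => a < b
  | .gt, a, b => b < a
  | .top, _, _ => True
  | .bot, _, _ => False

def CoordRel.toRel4 : CoordRel → Rel4
  | .lt => .lt
  | .gt => .gt
  | .top => .top

lemma rel4_comp (e : Rel4) (c c' : ℝ) :
    (∀ a, e.holds a c → e.holds a c') ∨ (∀ a, e.holds a c' → e.holds a c) := by
  cases e <;> rcases le_total c c' with h | h <;>
    first
      | exact Or.inl fun a ha => ha
      | exact Or.inl fun a ha => by dsimp [Rel4.holds] at *; linarith
      | exact Or.inr fun a ha => by dsimp [Rel4.holds] at *; linarith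

lemma coord_decomp (r1 r2 : CoordRel) (μ : ℝ) (dir : Bool) :
    ∃ (S : ℝ → Prop) (L H : Rel4), ∀ p q r : ℝ,
      (if dir then p < μ ∧ μ < r else r < μ ∧ μ < p) →
      (r1.holds p q ∧ r2.holds q r ↔ (S q ∧ L.holds p q) ∨ (¬ S q ∧ H.holds q r)) := by
  cases dir with
  | true =>
    refine ⟨fun q => q < μ,
      (match r2 with | .gt => Rel4.bot | _ => r1.toRel4),
      (match r1 with | .gt => Rel4.bot | _ => r2.toRel4), ?_⟩
    intro p q r hsep
    simp at hsep
    obtain ⟨h1, h2⟩ := hsep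
    cases r1 <;> cases r2 <;>
      dsimp only [CoordRel.holds, CoordRel.toRel4, Rel4.holds] <;>
      by_cases hq : q < μ <;>
      (try simp only [hq, not_lt, true_and, false_and, not_true_eq_false, not_false_eq_true,
        false_or, or_false, and_true, true_iff, false_iff, iff_true, iff_false, not_and,
        and_false, or_self]) <;>
      (try constructor) <;> intros <;>
      first
        | trivial
        | assumption
        | linarith
        | (constructor <;> first | assumption | trivial | linarith)
        | tauto
  | false =>
    refine ⟨fun q => μ ≤ q,
      (match r2 with | .lt => Rel4.bot | _ => r1.toRel4),
      (match r1 with | .lt => Rel4.bot | _ => r2.toRel4), ?_⟩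
    intro p q r hsep
    simp at hsep
    obtain ⟨h1, h2⟩ := hsep
    cases r1 <;> cases r2 <;>
      dsimp only [CoordRel.holds, CoordRel.toRel4, Rel4.holds] <;>
      by_cases hq : μ ≤ q <;>
      (try simp only [hq, not_le, true_and, false_and, not_true_eq_false, not_false_eq_true,
        false_or, or_false, and_true, true_iff, false_iff, iff_true, iff_false, not_and,
        and_false, or_self]) <;>
      (try constructor) <;> intros <;>
      first
        | trivial
        | assumption
        | linarith
        | (constructor <;> first | assumption | trivial | linarith)
        | tauto
open Set in
/-- auxiliary set: points of `P` reachable through a `q` of "type" `τ`. -/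
def FF (P Q : Set (Fin 3 → ℝ)) (S : Fin 3 → ℝ → Prop) (L H : Fin 3 → Rel4)
    (τ : Fin 3 → Bool) (r : Fin 3 → ℝ) : Set (Fin 3 → ℝ) :=
  {p ∈ P | ∃ q ∈ Q, (∀ i, (τ i = true ↔ S i (q i))) ∧
    (∀ i, (τ i = true → (L i).holds (p i) (q i)) ∧
      (τ i = false → (H i).holds (q i) (r i)))}

variable {P Q : Set (Fin 3 → ℝ)} {S : Fin 3 → ℝ → Prop} {L H : Fin 3 → Rel4}
  {τ : Fin 3 → Bool} {r r' : Fin 3 → ℝ}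

lemma FF_subset_P : FF P Q S L H τ r ⊆ P := fun _ hp => hp.1

lemma FF_const (hτ : ∀ i, τ i = true) : FF P Q S L H τ r = FF P Q S L H τ r' := by
  ext p
  simp only [FF, Set.mem_setOf_eq]
  refine and_congr_right fun _ => exists_congr fun q => and_congr_right fun _ =>
    and_congr_right fun _ => forall_congr' fun i => ?_
  constructor <;>
    exact fun h => ⟨h.1, fun hf => by rw [hτ i] at hf; cases hf⟩

lemma FF_comp_H (k : Fin 3) (hko : ∀ i, i ≠ k → τ i = true) :
    FF P Q S L H τ r ⊆ FF P Q S L H τ r' ∨ FF P Q S L H τ r' ⊆ FF P Q S L H τ r := by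
  have key : ∀ (a b : Fin 3 → ℝ), (∀ x, (H k).holds x (a k) → (H k).holds x (b k)) →
      FF P Q S L H τ a ⊆ FF P Q S L H τ b := by
    rintro a b hm p ⟨hpP, q, hqQ, ht, hc⟩
    refine ⟨hpP, q, hqQ, ht, fun i => ⟨(hc i).1, fun hf => ?_⟩⟩
    have hik : i = k := by
      by_contra hne
      rw [hko i hne] at hf; cases hf
    subst hik
    exact hm _ ((hc i).2 hf)
  rcases rel4_comp (H k) (r k) (r' k) with hm | hm
  · exact Or.inl (key r r' hm)
  · exact Or.inr (key r' r hm)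

lemma FF_comp_L (l : Fin 3) (hl : τ l = true) (ho : ∀ i, i ≠ l → τ i = false) :
    FF P Q S L H τ r ⊆ FF P Q S L H τ r' ∨ FF P Q S L H τ r' ⊆ FF P Q S L H τ r := by
  by_cases hsub : FF P Q S L H τ r ⊆ FF P Q S L H τ r'
  · exact Or.inl hsub
  right
  obtain ⟨p₀, hp₀, hp₀'⟩ := Set.not_subset.mp hsub
  obtain ⟨hp₀P, q₀, hq₀Q, ht₀, hc₀⟩ := hp₀
  rintro p ⟨hpP, q', hq'Q, ht', hc'⟩
  have hnot : ¬ (L l).holds (p₀ l) (q' l) := by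
    intro h
    refine hp₀' ⟨hp₀P, q', hq'Q, ht', fun i => ⟨fun htt => ?_, (hc' i).2⟩⟩
    have hil : i = l := by
      by_contra hne
      rw [ho i hne] at htt; cases htt
    subst hil
    exact h
  have hL' : (L l).holds (p l) (q' l) := (hc' l).1 hl
  have hL₀ : (L l).holds (p₀ l) (q₀ l) := (hc₀ l).1 hl
  refine ⟨hpP, q₀, hq₀Q, ht₀, fun i => ⟨fun htt => ?_, (hc₀ i).2⟩⟩
  have hil : i = l := by
    by_contra hne
    rw [ho i hne] at htt; cases htt
  subst hil
  rcases hE : L i with _ | _ | _ | _ <;> rw [hE] at hnot hL' hL₀ <;>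
    dsimp only [Rel4.holds] at hnot hL' hL₀ ⊢ <;>
    first
      | linarith
      | trivial
      | exact absurd trivial hnot
      | exact hL₀.elim

lemma FF_fff (hτ : ∀ i, τ i = false) : FF P Q S L H τ r = ∅ ∨ FF P Q S L H τ r = P := by
  by_cases hex : ∃ q ∈ Q, (∀ i, (τ i = true ↔ S i (q i))) ∧ ∀ i, (H i).holds (q i) (r i)
  · right
    ext p
    constructor
    · exact fun h => h.1
    · intro hp
      obtain ⟨q, hqQ, ht, hH⟩ := hex
      exact ⟨hp, q, hqQ, ht, fun i =>
        ⟨fun htt => (by rw [hτ i] at htt; cases htt), fun _ => hH i⟩⟩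
  · left
    ext p
    simp only [Set.mem_empty_iff_false, iff_false]
    rintro ⟨hpP, q, hqQ, ht, hc⟩
    exact hex ⟨q, hqQ, ht, fun i => (hc i).2 (hτ i)⟩

theorem stmt10 (P Q R : Set (Fin 3 → ℝ))
    (hP : P.Finite) (hQ : Q.Finite) (hR : R.Finite)
    (d₁ d₂ : (Fin 3 → ℝ) → (Fin 3 → ℝ) → Prop)
    (h₁ : IsGenDom d₁) (h₂ : IsGenDom d₂)
    (hx : SepAt 0 P R) (hy : SepAt 1 P R) (hz : SepAt 2 P R) :
    ((fun r => N2 P Q d₁ d₂ r) '' R).ncard ≤ (P.ncard + 1) ^ 6 := by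
  classical
  obtain ⟨R1, hR1⟩ := h₁
  obtain ⟨R2, hR2⟩ := h₂
  have hsep : ∀ i : Fin 3, ∃ m : ℝ, ∃ dir : Bool,
      ∀ p ∈ P, ∀ r ∈ R, if dir then p i < m ∧ m < r i else r i < m ∧ m < p i := by
    intro i
    have h : SepAt i P R := by fin_cases i <;> [exact hx; exact hy; exact hz]
    obtain ⟨m, h | h⟩ := h
    · exact ⟨m, true, fun p hp r hr => by simp [h.1 p hp, h.2 r hr]⟩
    · exact ⟨m, false, fun p hp r hr => by simp [h.1 r hr, h.2 p hp]⟩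
  choose μ dir hμ using hsep
  choose S L H hSLH using fun i => coord_decomp (R1 i) (R2 i) (μ i) (dir i)
  have hiff : ∀ p ∈ P, ∀ r ∈ R, ∀ q : Fin 3 → ℝ,
      (d₁ p q ∧ d₂ q r ↔ ∀ i, (S i (q i) ∧ (L i).holds (p i) (q i)) ∨
        (¬ S i (q i) ∧ (H i).holds (q i) (r i))) := by
    intro p hp r hr q
    rw [hR1, hR2, ← forall_and]
    exact forall_congr' fun i => hSLH i (p i) (q i) (r i) (hμ i p hp r hr)
  set G0 : (Fin 3 → ℝ) → Set (Fin 3 → ℝ) :=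
    fun v => FF P Q S L H ![true,true,true] v ∪ FF P Q S L H ![true,true,false] v with hG0
  set G1 : (Fin 3 → ℝ) → Set (Fin 3 → ℝ) :=
    fun v => FF P Q S L H ![true,false,true] v with hG1
  set G2 : (Fin 3 → ℝ) → Set (Fin 3 → ℝ) :=
    fun v => FF P Q S L H ![false,true,true] v with hG2
  set G3 : (Fin 3 → ℝ) → Set (Fin 3 → ℝ) :=
    fun v => FF P Q S L H ![true,false,false] v with hG3
  set G4 : (Fin 3 → ℝ) → Set (Fin 3 → ℝ) :=
    fun v => FF P Q S L H ![false,true,false] v with hG4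
  set G5 : (Fin 3 → ℝ) → Set (Fin 3 → ℝ) :=
    fun v => FF P Q S L H ![false,false,true] v ∪ FF P Q S L H ![false,false,false] v with hG5
  have hGP : ∀ v, G0 v ⊆ P ∧ G1 v ⊆ P ∧ G2 v ⊆ P ∧ G3 v ⊆ P ∧ G4 v ⊆ P ∧ G5 v ⊆ P :=
    fun v => ⟨Set.union_subset FF_subset_P FF_subset_P, FF_subset_P, FF_subset_P,
      FF_subset_P, FF_subset_P, Set.union_subset FF_subset_P FF_subset_P⟩
  -- decomposition of N2 into the six groups
  have hdecomp : ∀ r ∈ R, N2 P Q d₁ d₂ r = G0 r ∪ G1 r ∪ G2 r ∪ G3 r ∪ G4 r ∪ G5 r := by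
    intro r hr
    ext p
    constructor
    · rintro ⟨hpP, q, hqQ, hd⟩
      have hq := (hiff p hpP r hr q).mp hd
      set τ : Fin 3 → Bool := fun i => decide (S i (q i)) with hτ
      have htyp : ∀ i, τ i = true ↔ S i (q i) := fun i => by simp [hτ]
      have hmem : p ∈ FF P Q S L H τ r := by
        refine ⟨hpP, q, hqQ, htyp, fun i => ?_⟩
        rcases hq i with ⟨hS, hL⟩ | ⟨hS, hH⟩
        · exact ⟨fun _ => hL, fun hf => absurd ((htyp i).mpr hS) (by simp [hf])⟩
        · exact ⟨fun ht => absurd ((htyp i).mp ht) hS, fun _ => hH⟩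
      have hτe : τ = ![τ 0, τ 1, τ 2] := by
        funext i; fin_cases i <;> rfl
      rw [hτe] at hmem
      cases h0 : τ 0 <;> cases h1 : τ 1 <;> cases h2 : τ 2 <;> rw [h0, h1, h2] at hmem <;>
        simp only [hG0, hG1, hG2, hG3, hG4, hG5, Set.mem_union] <;> tauto
    · intro hp
      have hsub : ∀ τ : Fin 3 → Bool, FF P Q S L H τ r ⊆ N2 P Q d₁ d₂ r := by
        rintro τ p' ⟨hpP, q, hqQ, ht, hc⟩
        refine ⟨hpP, q, hqQ, (hiff p' hpP r hr q).mpr fun i => ?_⟩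
        cases hτi : τ i
        · exact Or.inr ⟨fun hS => absurd ((ht i).mpr hS) (by simp [hτi]), (hc i).2 hτi⟩
        · exact Or.inl ⟨(ht i).mp hτi, (hc i).1 hτi⟩
      simp only [hG0, hG1, hG2, hG3, hG4, hG5, Set.mem_union] at hp
      rcases hp with (((((h | h) | h) | h) | h) | h) | (h | h) <;> exact hsub _ h
  -- comparability of the six groups
  have hc0 : ∀ v w, G0 v ⊆ G0 w ∨ G0 w ⊆ G0 v := by
    intro v w
    have hK : FF P Q S L H ![true,true,true] v = FF P Q S L H ![true,true,true] w :=
      FF_const (by decide)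
    rcases FF_comp_H (P := P) (Q := Q) (S := S) (L := L) (H := H)
        (τ := ![true,true,false]) (r := v) (r' := w) 2 (by decide) with h | h
    · exact Or.inl (Set.union_subset_union hK.subset h)
    · exact Or.inr (Set.union_subset_union hK.superset h)
  have hc1 : ∀ v w, G1 v ⊆ G1 w ∨ G1 w ⊆ G1 v := fun v w =>
    FF_comp_H (P := P) (Q := Q) (S := S) (L := L) (H := H)
      (τ := ![true,false,true]) (r := v) (r' := w) 1 (by decide)
  have hc2 : ∀ v w, G2 v ⊆ G2 w ∨ G2 w ⊆ G2 v := fun v w =>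
    FF_comp_H (P := P) (Q := Q) (S := S) (L := L) (H := H)
      (τ := ![false,true,true]) (r := v) (r' := w) 0 (by decide)
  have hc3 : ∀ v w, G3 v ⊆ G3 w ∨ G3 w ⊆ G3 v := fun v w =>
    FF_comp_L (P := P) (Q := Q) (S := S) (L := L) (H := H)
      (τ := ![true,false,false]) (r := v) (r' := w) 0 (by decide) (by decide)
  have hc4 : ∀ v w, G4 v ⊆ G4 w ∨ G4 w ⊆ G4 v := fun v w =>
    FF_comp_L (P := P) (Q := Q) (S := S) (L := L) (H := H)
      (τ := ![false,true,false]) (r := v) (r' := w) 1 (by decide) (by decide)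
  have hc5 : ∀ v w, G5 v ⊆ G5 w ∨ G5 w ⊆ G5 v := by
    intro v w
    have hsubP : ∀ u, G5 u ⊆ P := fun u => (hGP u).2.2.2.2.2
    have hfull : ∀ u, FF P Q S L H ![false,false,false] u = P → G5 u = P := by
      intro u hu
      refine Set.Subset.antisymm (hsubP u) fun x hx => ?_
      exact Set.mem_union_right _ (by rw [hu]; exact hx)
    rcases FF_fff (P := P) (Q := Q) (S := S) (L := L) (H := H)
        (τ := ![false,false,false]) (r := v) (by decide) with he | hf
    · rcases FF_fff (P := P) (Q := Q) (S := S) (L := L) (H := H)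
          (τ := ![false,false,false]) (r := w) (by decide) with he' | hf'
      · have e : ∀ u, FF P Q S L H ![false,false,false] u = ∅ →
            G5 u = FF P Q S L H ![false,false,true] u := by
          intro u hu
          show FF P Q S L H ![false,false,true] u ∪ FF P Q S L H ![false,false,false] u = _
          rw [hu, Set.union_empty]
        rw [e v he, e w he']
        exact FF_comp_L (P := P) (Q := Q) (S := S) (L := L) (H := H)
          (τ := ![false,false,true]) (r := v) (r' := w) 2 (by decide) (by decide)
      · exact Or.inl fun x hx => (hfull w hf').symm ▸ hsubP v hx
    · exact Or.inr fun x hx => (hfull v hf).symm ▸ hsubP w hx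
  -- cardinality determines each group
  have heq : ∀ (s t : Set (Fin 3 → ℝ)), s ⊆ P → t ⊆ P → (s ⊆ t ∨ t ⊆ s) →
      s.ncard = t.ncard → s = t := by
    intro s t hs ht hcmp hcard
    rcases hcmp with h | h
    · exact Set.eq_of_subset_of_ncard_le h hcard.ge (hP.subset ht)
    · exact (Set.eq_of_subset_of_ncard_le h hcard.le (hP.subset hs)).symm
  set n := P.ncard with hn
  have hlt : ∀ (s : Set (Fin 3 → ℝ)), s ⊆ P → s.ncard < n + 1 :=
    fun s hs => Nat.lt_succ_of_le (Set.ncard_le_ncard hs hP)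
  set φ : (Fin 3 → ℝ) → (Fin (n+1) × Fin (n+1) × Fin (n+1) × Fin (n+1) × Fin (n+1) × Fin (n+1)) :=
    fun v => (⟨(G0 v).ncard, hlt _ (hGP v).1⟩, ⟨(G1 v).ncard, hlt _ (hGP v).2.1⟩,
      ⟨(G2 v).ncard, hlt _ (hGP v).2.2.1⟩, ⟨(G3 v).ncard, hlt _ (hGP v).2.2.2.1⟩,
      ⟨(G4 v).ncard, hlt _ (hGP v).2.2.2.2.1⟩, ⟨(G5 v).ncard, hlt _ (hGP v).2.2.2.2.2⟩) with hφ
  have hφdet : ∀ r ∈ R, ∀ r' ∈ R, φ r = φ r' →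
      N2 P Q d₁ d₂ r = N2 P Q d₁ d₂ r' := by
    intro r hr r' hr' h
    simp only [hφ, Prod.mk.injEq, Fin.mk.injEq] at h
    obtain ⟨e0, e1, e2, e3, e4, e5⟩ := h
    rw [hdecomp r hr, hdecomp r' hr',
      heq _ _ ((hGP r).1) ((hGP r').1) (hc0 r r') e0,
      heq _ _ ((hGP r).2.1) ((hGP r').2.1) (hc1 r r') e1,
      heq _ _ ((hGP r).2.2.1) ((hGP r').2.2.1) (hc2 r r') e2,
      heq _ _ ((hGP r).2.2.2.1) ((hGP r').2.2.2.1) (hc3 r r') e3,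
      heq _ _ ((hGP r).2.2.2.2.1) ((hGP r').2.2.2.2.1) (hc4 r r') e4,
      heq _ _ ((hGP r).2.2.2.2.2) ((hGP r').2.2.2.2.2) (hc5 r r') e5]
  have hfin : (φ '' R).Finite := hR.image φ
  have key : (fun r => N2 P Q d₁ d₂ r) '' R ⊆
      (fun v => if h : ∃ u ∈ R, φ u = v then N2 P Q d₁ d₂ h.choose else ∅) '' (φ '' R) := by
    rintro _ ⟨r, hr, rfl⟩
    refine ⟨φ r, ⟨r, hr, rfl⟩, ?_⟩
    have hex : ∃ u ∈ R, φ u = φ r := ⟨r, hr, rfl⟩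
    show (if h : ∃ u ∈ R, φ u = φ r then N2 P Q d₁ d₂ h.choose else ∅) = N2 P Q d₁ d₂ r
    rw [dif_pos hex]
    exact hφdet _ hex.choose_spec.1 r hr hex.choose_spec.2
  calc ((fun r => N2 P Q d₁ d₂ r) '' R).ncard
      ≤ ((fun v => if h : ∃ u ∈ R, φ u = v then N2 P Q d₁ d₂ h.choose else ∅) '' (φ '' R)).ncard :=
        Set.ncard_le_ncard key (hfin.image _)
    _ ≤ (φ '' R).ncard := Set.ncard_image_le hfin
    _ ≤ (Set.univ : Set (Fin (n+1) × Fin (n+1) × Fin (n+1) × Fin (n+1) × Fin (n+1) × Fin (n+1))).ncard :=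
        Set.ncard_le_ncard (Set.subset_univ _) Set.finite_univ
    _ = Nat.card (Fin (n+1) × Fin (n+1) × Fin (n+1) × Fin (n+1) × Fin (n+1) × Fin (n+1)) :=
        Set.ncard_univ _
    _ = (n+1)^6 := by simp [Nat.card_eq_fintype_card]; ring
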